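/- arXiv:1707.06059 — 5 statements merged into one kernel-verified Lean document; each statement's English description precedes it below -/
import Mathlib

section
/- For every real x in (0,1] and every index n ≥ 1 such that the n-th binary digit of x equals 1, one has S_n(x) ≤ 2^n − 1, where S_n is the Birkhoff sum of the Saint-Petersburg potential under the doubling map. -/
open Filter Set MeasureTheory
open scoped ENNReal Classical

/-- The doubling map on `(0,1]`. -/
noncomputable def T (x : ℝ) : ℝ := 2 * x - ⌈2 * x⌉ + 1

/-- The Saint-Petersburg potential: `phi x = 2^k` for `x ∈ (2^{-k-1}, 2^{-k}]`. -/
noncomputable def phi (x : ℝ) : ℝ := 2 ^ ⌊Real.logb 2 x⁻¹⌋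

/-- Birkhoff sums of the Saint-Petersburg potential under the doubling map. -/
noncomputable def S (n : ℕ) (x : ℝ) : ℝ := ∑ j ∈ Finset.range n, phi (T^[j] x)

/-- The `n`-th binary digit of `x` (for `n ≥ 1`): `eps n x = ⌈2 T^{n-1} x⌉ - 1`. -/
noncomputable def eps (n : ℕ) (x : ℝ) : ℤ := ⌈2 * T^[n-1] x⌉ - 1

lemma T_low {x : ℝ} (h0 : 0 < x) (h1 : x ≤ 1/2) : T x = 2 * x := by
  have : ⌈2 * x⌉ = 1 := by
    rw [Int.ceil_eq_iff]
    constructor <;> push_cast <;> nlinarith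
  simp [T, this]

lemma T_high {x : ℝ} (h0 : 1/2 < x) (h1 : x ≤ 1) : T x = 2 * x - 1 := by
  have : ⌈2 * x⌉ = 2 := by
    rw [Int.ceil_eq_iff]
    constructor <;> push_cast <;> nlinarith
  rw [T, this]; push_cast; ring

lemma T_mem {x : ℝ} (hx : x ∈ Set.Ioc (0:ℝ) 1) : T x ∈ Set.Ioc (0:ℝ) 1 := by
  rcases le_or_gt x (1/2) with hle | hlt
  · rw [T_low hx.1 hle]; constructor <;> nlinarith [hx.1]
  · rw [T_high hlt hx.2]; constructor <;> nlinarith [hx.2]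

lemma phi_high {x : ℝ} (h0 : 1/2 < x) (h1 : x ≤ 1) : phi x = 1 := by
  have hx0 : (0:ℝ) < x := by linarith
  have hfl : ⌊Real.logb 2 x⁻¹⌋ = 0 := by
    rw [Int.floor_eq_zero_iff]
    constructor
    · exact Real.logb_nonneg one_lt_two (by rw [le_inv_comm₀ one_pos hx0]; simpa using h1)
    · have hinv : x⁻¹ < 2 := by
        rw [inv_lt_comm₀ hx0 (by norm_num)]; linarith
      have := (Real.logb_lt_iff_lt_rpow one_lt_two (by positivity)).2
        (by simpa [Real.rpow_one] using hinv : x⁻¹ < (2:ℝ) ^ (1:ℝ))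
      simpa using this
  rw [phi, hfl, zpow_zero]

lemma phi_low {x : ℝ} (h0 : 0 < x) (h1 : x ≤ 1/2) : phi x = 2 * phi (2 * x) := by
  have hx2 : (0:ℝ) < 2 * x := by linarith
  have hlog : Real.logb 2 x⁻¹ = Real.logb 2 (2*x)⁻¹ + 1 := by
    have : x⁻¹ = (2*x)⁻¹ * 2 := by field_simp
    rw [this, Real.logb_mul (by positivity) (by norm_num),
      Real.logb_self_eq_one one_lt_two]
  rw [phi, phi, hlog, Int.floor_add_one, zpow_add_one₀ (by norm_num)]
  ring

lemma S_succ (n : ℕ) (x : ℝ) : S (n+1) x = phi x + S n (T x) := by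
  rw [S, Finset.sum_range_succ', S]
  simp only [Function.iterate_succ_apply, Function.iterate_zero_apply]
  ring

lemma eps_succ (n : ℕ) (x : ℝ) : eps (n+2) x = eps (n+1) (T x) := by
  simp [eps, Function.iterate_succ_apply]

lemma key : ∀ n : ℕ, ∀ x : ℝ, x ∈ Set.Ioc (0:ℝ) 1 → eps (n+1) x = 1 →
    phi x ≤ 2 ^ n ∧ S (n+1) x ≤ 2 ^ (n+1) - 1 := by
  intro n
  induction n with
  | zero =>
    intro x hx h
    have hc : ⌈2 * x⌉ = 2 := by
      have h' : eps 1 x = ⌈2 * x⌉ - 1 := by simp [eps]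
      rw [h'] at h; omega
    have hhalf : 1/2 < x := by
      have := (Int.ceil_eq_iff.mp hc).1
      push_cast at this; linarith
    have hphi : phi x = 1 := phi_high hhalf hx.2
    refine ⟨by rw [hphi]; norm_num, ?_⟩
    have : S 1 x = phi x := by simp [S]
    rw [this, hphi]; norm_num
  | succ n ih =>
    intro x hx h
    have hT : T x ∈ Set.Ioc (0:ℝ) 1 := T_mem hx
    have hT1 : eps (n+1) (T x) = 1 := by rw [← eps_succ]; exact h
    obtain ⟨hphi, hS⟩ := ih (T x) hT hT1
    rcases le_or_gt x (1/2) with hle | hlt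
    · have hTx : T x = 2 * x := T_low hx.1 hle
      have hphix : phi x = 2 * phi (T x) := by rw [hTx]; exact phi_low hx.1 hle
      constructor
      · rw [hphix, pow_succ]; linarith
      · rw [S_succ, hphix]
        have h2 : (2:ℝ) ^ (n+1+1) = 2 * 2^(n+1) := by ring
        have h3 : (2:ℝ) ^ (n+1) = 2 * 2^n := by ring
        linarith
    · have hphix : phi x = 1 := phi_high hlt hx.2
      constructor
      · rw [hphix]; exact one_le_pow₀ one_le_two
      · rw [S_succ, hphix]
        have h1 : (1:ℝ) ≤ 2 ^ (n+1) := one_le_pow₀ one_le_two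
        have h2 : (2:ℝ)^(n+1+1) = 2 * 2^(n+1) := by ring
        linarith

theorem saint_petersburg_stmt1 (x : ℝ) (hx : x ∈ Set.Ioc (0 : ℝ) 1)
    (n : ℕ) (hn : 1 ≤ n) (h : eps n x = 1) :
    S n x ≤ 2 ^ n - 1 := by
  obtain ⟨m, rfl⟩ := Nat.exists_eq_add_of_le hn
  have := key m x hx (by simpa [Nat.add_comm] using h)
  simpa [Nat.add_comm] using this.2
end

section
/- For every q > 0 there exists a unique real t = t(q) such that Σ_{j=1}^{∞} 2^{-t j − q(2^j − 1)} = 1. Moreover the function q ↦ t(q) is strictly decreasing on (0, ∞). -/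
/-!
For `q > 0` the series `S(q, t) = ∑ⱼ 2^(-t j - q (2^j - 1))` converges for every `t` by the ratio
test (consecutive terms have ratio `2^(-t - q 2^j) → 0`), and each term is strictly decreasing in
`t` and in `q`. So `t ↦ S(q, t)` is continuous and strictly decreasing, with
`S(q, 1) < ∑ⱼ 2^(-j) = 1 < 2 ≤ S(q, -(q + 1))`, and the intermediate value theorem gives a unique
root `t(q)` of `S(q, t) = 1`. If `q₁ < q₂`, then `S(q₁, t(q₂)) > S(q₂, t(q₂)) = 1 = S(q₁, t(q₁))`,
whence `t(q₂) < t(q₁)`.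
-/

open Filter Set

noncomputable section

namespace SaintPetersburg

/-- Indexed from `j = 0`: `term q t j` is the paper's term for the index `j + 1`. -/
def term (q t : ℝ) (j : ℕ) : ℝ :=
  (2 : ℝ) ^ (-(t * ((j : ℝ) + 1)) - q * ((2 : ℝ) ^ (j + 1) - 1))

def series (q t : ℝ) : ℝ :=
  ∑' j, term q t j

lemma term_pos (q t : ℝ) (j : ℕ) : 0 < term q t j :=
  Real.rpow_pos_of_pos two_pos _

lemma strictAnti_term_t (q : ℝ) (j : ℕ) : StrictAnti fun t => term q t j := by
  intro t₁ t₂ h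
  apply Real.rpow_lt_rpow_of_exponent_lt one_lt_two
  have hj : (0 : ℝ) < (j : ℝ) + 1 := by positivity
  nlinarith

lemma strictAnti_term_q (t : ℝ) (j : ℕ) : StrictAnti fun q => term q t j := by
  intro q₁ q₂ h
  apply Real.rpow_lt_rpow_of_exponent_lt one_lt_two
  have hj : (1 : ℝ) < (2 : ℝ) ^ (j + 1) := one_lt_pow₀ one_lt_two (Nat.succ_ne_zero j)
  nlinarith

lemma term_succ_div_term (q t : ℝ) (n : ℕ) :
    term q t (n + 1) / term q t n = (2 : ℝ) ^ (-t - q * (2 : ℝ) ^ (n + 1)) := by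
  rw [term, term, ← Real.rpow_sub two_pos]
  congr 1
  push_cast
  ring

lemma summable_term {q : ℝ} (hq : 0 < q) (t : ℝ) : Summable (term q t) := by
  refine summable_of_ratio_test_tendsto_lt_one zero_lt_one
    (Eventually.of_forall fun n => (term_pos q t n).ne') ?_
  simp_rw [Real.norm_of_nonneg (term_pos q t _).le, term_succ_div_term]
  have hexp : Tendsto (fun n : ℕ => -t - q * (2 : ℝ) ^ (n + 1)) atTop atBot := by
    have hpow : Tendsto (fun n : ℕ => (2 : ℝ) ^ (n + 1)) atTop atTop :=
      (tendsto_pow_atTop_atTop_of_one_lt one_lt_two).comp (tendsto_add_atTop_nat 1)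
    exact tendsto_atBot_add_const_left _ _
      (tendsto_neg_atTop_atBot.comp (hpow.const_mul_atTop hq))
  exact (tendsto_rpow_atBot_of_base_gt_one 2 one_lt_two).comp hexp

lemma strictAnti_series {q : ℝ} (hq : 0 < q) : StrictAnti (series q) := fun t₁ t₂ h =>
  Summable.tsum_lt_tsum_of_nonneg (i := 0) (fun j => (term_pos q t₂ j).le)
    (fun j => (strictAnti_term_t q j h).le) (strictAnti_term_t q 0 h) (summable_term hq t₁)

lemma strictAntiOn_series_q (t : ℝ) : StrictAntiOn (fun q => series q t) (Ioi 0) :=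
  fun _ hq₁ _ _ h =>
  Summable.tsum_lt_tsum_of_nonneg (i := 0) (fun j => (term_pos _ t j).le)
    (fun j => (strictAnti_term_q t j h).le) (strictAnti_term_q t 0 h) (summable_term hq₁ t)

lemma continuousOn_series {q : ℝ} (hq : 0 < q) (a : ℝ) : ContinuousOn (series q) (Ici a) := by
  refine continuousOn_tsum (fun j => ?_) (summable_term hq a) fun j t ht => ?_
  · exact (Real.continuous_const_rpow two_ne_zero |>.comp (by fun_prop)).continuousOn
  · rw [Real.norm_of_nonneg (term_pos q t j).le]
    exact (strictAnti_term_t q j).antitone ht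

lemma series_one_lt_one {q : ℝ} (hq : 0 < q) : series q 1 < 1 := by
  have hgeom : HasSum (term 0 1) 1 := by
    convert hasSum_geometric_two' 1 using 1
    ext j
    rw [term, zero_mul, sub_zero, one_mul, Real.rpow_neg two_pos.le, ← Nat.cast_succ,
      Real.rpow_natCast, pow_succ]
    ring
  calc series q 1 < ∑' j, term 0 1 j :=
        Summable.tsum_lt_tsum_of_nonneg (i := 0) (fun j => (term_pos q 1 j).le)
          (fun j => (strictAnti_term_q 1 j hq).le) (strictAnti_term_q 1 0 hq) hgeom.summable
    _ = 1 := hgeom.tsum_eq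

lemma one_lt_series_neg {q : ℝ} (hq : 0 < q) : 1 < series q (-(q + 1)) := by
  have hterm : term q (-(q + 1)) 0 = 2 := by norm_num [term]
  calc (1 : ℝ) < term q (-(q + 1)) 0 := by rw [hterm]; norm_num
    _ ≤ series q (-(q + 1)) :=
      (summable_term hq _).le_tsum 0 fun j _ => (term_pos q _ j).le

lemma existsUnique_series_eq_one {q : ℝ} (hq : 0 < q) : ∃! t, series q t = 1 := by
  have hle : -(q + 1) ≤ 1 := by linarith
  obtain ⟨t, -, ht⟩ := intermediate_value_Icc' hle
    ((continuousOn_series hq _).mono Icc_subset_Ici_self)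
    ⟨(series_one_lt_one hq).le, (one_lt_series_neg hq).le⟩
  exact ⟨t, ht, fun s hs => (strictAnti_series hq).injective (hs.trans ht.symm)⟩

end SaintPetersburg

end

open SaintPetersburg

theorem saint_petersburg_stmt7 :
    (∀ q : ℝ, 0 < q → ∃! t : ℝ,
      ∑' j : ℕ, (2 : ℝ) ^ (-(t * ((j : ℝ) + 1)) - q * ((2 : ℝ) ^ (j + 1) - 1)) = 1) ∧
    (∀ q₁ q₂ t₁ t₂ : ℝ, 0 < q₁ → q₁ < q₂ →
      ∑' j : ℕ, (2 : ℝ) ^ (-(t₁ * ((j : ℝ) + 1)) - q₁ * ((2 : ℝ) ^ (j + 1) - 1)) = 1 →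
      ∑' j : ℕ, (2 : ℝ) ^ (-(t₂ * ((j : ℝ) + 1)) - q₂ * ((2 : ℝ) ^ (j + 1) - 1)) = 1 →
      t₂ < t₁) := by
  refine ⟨fun q hq => existsUnique_series_eq_one hq, fun q₁ q₂ t₁ t₂ hq₁ hq h₁ h₂ => ?_⟩
  change series q₁ t₁ = 1 at h₁
  change series q₂ t₂ = 1 at h₂
  have h : series q₁ t₁ < series q₁ t₂ := by
    rw [h₁, ← h₂]
    exact strictAntiOn_series_q t₂ hq₁ (hq₁.trans hq) hq
  exact (strictAnti_series hq₁).lt_iff_gt.mp h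
end

section
/- Let J ⊂ ℕ be a set of positive integers of density zero, i.e. lim_{n→∞} (1/n)·#{k ≤ n : k ∈ J} = 0, and let (a_k)_{k≥1} be any sequence of 0's and 1's. Then the set E(J, (a_k)) = {x ∈ (0,1] : ε_k(x) = a_k for all k ∈ J} has Hausdorff dimension 1. -/
open Filter Set MeasureTheory
open scoped ENNReal Classical

/-!
Enlarge `J` by the positive multiples of `q`. The enlarged set `J'` still has density at most
`2 / q`, and now any two consecutive positions of `J'` are at most `q` apart. Reading off the
binary digits of `x` at the positions outside `J'` maps the fixed-digit set of `J'` onto `(0, 1]`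
(a preimage of `y` is obtained by splicing the digits of `y` into those positions).
If `x ≠ y` first differ at digit `m + 1`, they agree again at the next position `k ≤ m + 1 + q`
of `J'`, which forces `|x - y| > 2⁻ᵏ`; their images agree in the roughly `(1 - 2 / q) m` free
digits before `m + 1`. So the map is Hölder of exponent `1 - 2 / q`, the set has dimension at
least `1 - 2 / q`, and `q → ∞` gives the claim.
-/

theorem ceil_eq_one_iff {x : ℝ} : ⌈x⌉ = 1 ↔ x ∈ Ioc 0 1 := by
  simp [Int.ceil_eq_iff]

section Digits

variable {x y : ℝ}

theorem T_mem_Ioc (x : ℝ) : T x ∈ Ioc 0 1 := by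
  rw [T]
  exact ⟨by linarith [Int.ceil_lt_add_one (2 * x)], by linarith [Int.le_ceil (2 * x)]⟩

theorem T_iterate_mem_Ioc (hx : x ∈ Ioc 0 1) : ∀ n, T^[n] x ∈ Ioc 0 1
  | 0 => hx
  | n + 1 => by rw [Function.iterate_succ_apply']; exact T_mem_Ioc _

theorem eps_eq_zero_or_one (hx : x ∈ Ioc 0 1) (k : ℕ) : eps k x = 0 ∨ eps k x = 1 := by
  obtain ⟨h0, h1⟩ := T_iterate_mem_Ioc hx (k - 1)
  have hpos : 0 < ⌈2 * T^[k - 1] x⌉ := Int.ceil_pos.2 (by linarith)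
  have hle : ⌈2 * T^[k - 1] x⌉ ≤ 2 := Int.ceil_le.2 (by push_cast; linarith)
  rw [eps]
  omega

theorem ceil_two_mul_sub_ceil (z : ℝ) : ⌈2 * (z - ⌈z⌉ + 1)⌉ = ⌈2 * z⌉ - 2 * ⌈z⌉ + 2 := by
  rw [show 2 * (z - ⌈z⌉ + 1) = 2 * z + ((2 - 2 * ⌈z⌉ : ℤ) : ℝ) by push_cast; ring,
    Int.ceil_add_intCast]
  ring

theorem T_iterate_eq (hx : x ∈ Ioc 0 1) (n : ℕ) : T^[n] x = 2 ^ n * x - ⌈2 ^ n * x⌉ + 1 := by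
  induction n with
  | zero => simp [ceil_eq_one_iff.2 hx]
  | succ n ih =>
    rw [Function.iterate_succ_apply', ih, T, ceil_two_mul_sub_ceil, pow_succ', mul_assoc]
    push_cast
    ring

-- `⌈2 ^ k * x⌉ = N` says `x ∈ ((N - 1) / 2 ^ k, N / 2 ^ k]`, so it encodes the first `k` digits.
theorem ceil_two_pow_succ (hx : x ∈ Ioc 0 1) (k : ℕ) :
    ⌈2 ^ (k + 1) * x⌉ = 2 * ⌈2 ^ k * x⌉ + eps (k + 1) x - 1 := by
  rw [eps, Nat.add_sub_cancel, T_iterate_eq hx, ceil_two_mul_sub_ceil, pow_succ', mul_assoc]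
  ring

theorem ceil_two_pow_eq_iff (hx : x ∈ Ioc 0 1) (hy : y ∈ Ioc 0 1) (k : ℕ) :
    ⌈2 ^ k * x⌉ = ⌈2 ^ k * y⌉ ↔ ∀ j ∈ Icc 1 k, eps j x = eps j y := by
  induction k with
  | zero =>
    simp only [pow_zero, one_mul, ceil_eq_one_iff.2 hx, ceil_eq_one_iff.2 hy, true_iff]
    intro j hj
    exact absurd (hj.1.trans hj.2) (by norm_num)
  | succ k ih =>
    have step : ⌈2 ^ (k + 1) * x⌉ = ⌈2 ^ (k + 1) * y⌉ ↔
        ⌈2 ^ k * x⌉ = ⌈2 ^ k * y⌉ ∧ eps (k + 1) x = eps (k + 1) y := by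
      rw [ceil_two_pow_succ hx, ceil_two_pow_succ hy]
      have := eps_eq_zero_or_one hx (k + 1)
      have := eps_eq_zero_or_one hy (k + 1)
      omega
    rw [step, ih]
    constructor
    · rintro ⟨h, hk⟩ j ⟨hj1, hj2⟩
      by_cases hjk : j ≤ k
      · exact h j ⟨hj1, hjk⟩
      · obtain rfl : j = k + 1 := by omega
        exact hk
    · intro h
      exact ⟨fun j hj => h j ⟨hj.1, hj.2.trans k.le_succ⟩, h (k + 1) ⟨by omega, le_rfl⟩⟩

theorem abs_sub_sub_ceil_sub_lt_one (a b : ℝ) : |(a - b) - (⌈a⌉ - ⌈b⌉)| < 1 := by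
  rw [abs_lt]
  constructor <;> linarith [Int.ceil_lt_add_one a, Int.le_ceil a, Int.ceil_lt_add_one b,
    Int.le_ceil b]

theorem abs_sub_lt_of_eps_eq (hx : x ∈ Ioc 0 1) (hy : y ∈ Ioc 0 1) {k : ℕ}
    (h : ∀ j ∈ Icc 1 k, eps j x = eps j y) : |x - y| < (1 / 2) ^ k := by
  have key := abs_sub_sub_ceil_sub_lt_one (2 ^ k * x) (2 ^ k * y)
  rw [(ceil_two_pow_eq_iff hx hy k).2 h, sub_self, sub_zero, ← mul_sub, abs_mul,
    abs_of_pos (by positivity)] at key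
  rw [one_div_pow, lt_div_iff₀ (by positivity)]
  linarith

theorem half_pow_lt_abs_sub_of_eps_ne (hx : x ∈ Ioc 0 1) (hy : y ∈ Ioc 0 1) {j k : ℕ}
    (hj : j ∈ Icc 1 k) (hne : eps j x ≠ eps j y) (heq : eps (k + 1) x = eps (k + 1) y) :
    (1 / 2) ^ (k + 1) < |x - y| := by
  have hc : ⌈2 ^ k * x⌉ - ⌈2 ^ k * y⌉ ≠ 0 :=
    sub_ne_zero.2 fun h => hne ((ceil_two_pow_eq_iff hx hy k).1 h j hj)
  have hgap : (2 : ℤ) ≤ |⌈2 ^ (k + 1) * x⌉ - ⌈2 ^ (k + 1) * y⌉| := by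
    rw [ceil_two_pow_succ hx, ceil_two_pow_succ hy, heq,
      show 2 * ⌈2 ^ k * x⌉ + eps (k + 1) y - 1 - (2 * ⌈2 ^ k * y⌉ + eps (k + 1) y - 1) =
        2 * (⌈2 ^ k * x⌉ - ⌈2 ^ k * y⌉) by ring, abs_mul, abs_two]
    linarith [Int.one_le_abs hc]
  have hgap' : (2 : ℝ) ≤ |(⌈2 ^ (k + 1) * x⌉ : ℝ) - ⌈2 ^ (k + 1) * y⌉| := by exact_mod_cast hgap
  have key := (abs_sub_abs_le_abs_sub _ _).trans_lt ((abs_sub_comm _ _).trans_lt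
    (abs_sub_sub_ceil_sub_lt_one (2 ^ (k + 1) * x) (2 ^ (k + 1) * y)))
  rw [← mul_sub, abs_mul, abs_of_pos (by positivity : (0 : ℝ) < 2 ^ (k + 1))] at key
  rw [one_div_pow, div_lt_iff₀ (by positivity)]
  linarith

theorem eq_of_eps_eq (hx : x ∈ Ioc 0 1) (hy : y ∈ Ioc 0 1)
    (h : ∀ k ∈ Ici 1, eps k x = eps k y) : x = y := by
  by_contra hxy
  obtain ⟨k, hk⟩ := exists_pow_lt_of_lt_one (abs_pos.2 (sub_ne_zero.2 hxy))
    (by norm_num : (1 / 2 : ℝ) < 1)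
  exact (abs_sub_lt_of_eps_eq hx hy fun j hj => h j hj.1).not_gt hk

theorem exists_eps_eq_and_eps_ne (hx : x ∈ Ioc 0 1) (hy : y ∈ Ioc 0 1) (hxy : x ≠ y) :
    ∃ m, (∀ j ∈ Icc 1 m, eps j x = eps j y) ∧ eps (m + 1) x ≠ eps (m + 1) y := by
  have hex : ∃ m, eps (m + 1) x ≠ eps (m + 1) y := by
    by_contra! h
    exact hxy (eq_of_eps_eq hx hy fun k hk => Nat.sub_add_cancel hk ▸ h (k - 1))
  refine ⟨Nat.find hex, fun j ⟨hj1, hj2⟩ => ?_, Nat.find_spec hex⟩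
  have := Nat.find_min hex (m := j - 1) (by omega)
  rwa [not_not, Nat.sub_add_cancel hj1] at this

theorem T_iterate_succ (n : ℕ) (x : ℝ) : T^[n + 1] x = 2 * T^[n] x - eps (n + 1) x := by
  rw [Function.iterate_succ_apply', T, eps, Nat.add_sub_cancel]
  push_cast
  ring

theorem eps_succ_succ (n : ℕ) (x : ℝ) : eps (n + 2) x = eps (n + 1) (T x) := by
  rfl

theorem frequently_eps_eq_one (hx : x ∈ Ioc 0 1) : ∃ᶠ k in atTop, eps k x = 1 := by
  rw [frequently_atTop]
  by_contra! h
  obtain ⟨N, hN⟩ := h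
  have hzero : ∀ k, N ≤ k → eps k x = 0 := fun k hk =>
    (eps_eq_zero_or_one hx k).resolve_right (hN k hk)
  have hdouble : ∀ i, T^[N + i] x = 2 ^ i * T^[N] x := by
    intro i
    induction i with
    | zero => simp
    | succ i ih =>
      rw [← add_assoc, T_iterate_succ, ih, hzero _ (by omega)]
      push_cast
      ring
  obtain ⟨hpos, -⟩ := T_iterate_mem_Ioc hx N
  obtain ⟨i, hi⟩ := pow_unbounded_of_one_lt (T^[N] x)⁻¹ (by norm_num : (1 : ℝ) < 2)
  have hle := (T_iterate_mem_Ioc hx (N + i)).2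
  rw [hdouble] at hle
  have := mul_lt_mul_of_pos_right hi hpos
  rw [inv_mul_cancel₀ hpos.ne'] at this
  linarith

end Digits

theorem frequently_atTop_add_one {p : ℕ → Prop} (h : ∃ᶠ k in atTop, p k) :
    ∃ᶠ k in atTop, p (k + 1) := by
  rwa [← map_add_atTop_eq_nat 1, frequently_map] at h

noncomputable def binaryVal (c : ℕ → ℤ) : ℝ := ∑' k : ℕ, (c (k + 1) : ℝ) / 2 ^ (k + 1)

section BinaryVal

variable {c d : ℕ → ℤ}

theorem binaryVal_congr (h : ∀ k ∈ Ici 1, c k = d k) : binaryVal c = binaryVal d :=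
  tsum_congr fun k => by rw [h (k + 1) (Nat.le_add_left 1 k)]

theorem binaryVal_term_nonneg (hc : ∀ k, c k = 0 ∨ c k = 1) (k : ℕ) :
    0 ≤ (c (k + 1) : ℝ) / 2 ^ (k + 1) := by
  rcases hc (k + 1) with h | h <;> rw [h] <;> positivity

theorem binaryVal_term_le (hc : ∀ k, c k = 0 ∨ c k = 1) (k : ℕ) :
    (c (k + 1) : ℝ) / 2 ^ (k + 1) ≤ 1 / 2 / 2 ^ k := by
  rw [div_div, ← pow_succ']
  rcases hc (k + 1) with h | h <;> rw [h] <;> norm_num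

theorem summable_binaryVal (hc : ∀ k, c k = 0 ∨ c k = 1) :
    Summable fun k => (c (k + 1) : ℝ) / 2 ^ (k + 1) :=
  (summable_geometric_two' 1).of_nonneg_of_le (binaryVal_term_nonneg hc) (binaryVal_term_le hc)

theorem binaryVal_mem_Icc (hc : ∀ k, c k = 0 ∨ c k = 1) : binaryVal c ∈ Icc 0 1 :=
  ⟨tsum_nonneg (binaryVal_term_nonneg hc), (tsum_geometric_two' 1).symm ▸
    (summable_binaryVal hc).tsum_le_tsum (binaryVal_term_le hc) (summable_geometric_two' 1)⟩

theorem two_mul_binaryVal (hc : ∀ k, c k = 0 ∨ c k = 1) :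
    2 * binaryVal c = c 1 + binaryVal (fun k => c (k + 1)) := by
  rw [binaryVal, (summable_binaryVal hc).tsum_eq_zero_add, binaryVal, mul_add,
    ← tsum_mul_left]
  congr 1
  · ring
  · exact tsum_congr fun k => by rw [pow_succ]; field_simp

theorem binaryVal_mem_Ioc (hc : ∀ k, c k = 0 ∨ c k = 1) (h1 : ∃ᶠ k in atTop, c k = 1) :
    binaryVal c ∈ Ioc 0 1 := by
  obtain ⟨k, hk, hck⟩ := frequently_atTop.1 h1 1
  refine ⟨(summable_binaryVal hc).tsum_pos (binaryVal_term_nonneg hc) (k - 1) ?_,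
    (binaryVal_mem_Icc hc).2⟩
  rw [Nat.sub_add_cancel hk, hck]
  positivity

theorem ceil_two_mul_binaryVal (hc : ∀ k, c k = 0 ∨ c k = 1) (h1 : ∃ᶠ k in atTop, c k = 1) :
    ⌈2 * binaryVal c⌉ = c 1 + 1 := by
  rw [two_mul_binaryVal hc, Int.ceil_intCast_add,
    ceil_eq_one_iff.2 (binaryVal_mem_Ioc (fun k => hc (k + 1)) (frequently_atTop_add_one h1))]

theorem eps_binaryVal (hc : ∀ k, c k = 0 ∨ c k = 1) (h1 : ∃ᶠ k in atTop, c k = 1) :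
    ∀ k ∈ Ici 1, eps k (binaryVal c) = c k := by
  suffices ∀ n, eps (n + 1) (binaryVal c) = c (n + 1) from fun k hk =>
    Nat.sub_add_cancel hk ▸ this (k - 1)
  intro n
  induction n generalizing c with
  | zero =>
    rw [eps, Nat.sub_self, Function.iterate_zero_apply, ceil_two_mul_binaryVal hc h1]
    ring
  | succ n ih =>
    have hT : T (binaryVal c) = binaryVal (fun k => c (k + 1)) := by
      rw [T, ceil_two_mul_binaryVal hc h1, two_mul_binaryVal hc]
      push_cast
      ring
    rw [eps_succ_succ, hT, ih (fun k => hc (k + 1)) (frequently_atTop_add_one h1)]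

theorem abs_binaryVal_sub_le (hc : ∀ k, c k = 0 ∨ c k = 1) (hd : ∀ k, d k = 0 ∨ d k = 1) {P : ℕ}
    (h : ∀ j ∈ Icc 1 P, c j = d j) : |binaryVal c - binaryVal d| ≤ (1 / 2) ^ P := by
  induction P generalizing c d with
  | zero =>
    have hc' := binaryVal_mem_Icc hc
    have hd' := binaryVal_mem_Icc hd
    rw [pow_zero, abs_le]
    constructor <;> linarith [hc'.1, hc'.2, hd'.1, hd'.2]
  | succ P ih =>
    have h1 : c 1 = d 1 := h 1 ⟨le_rfl, by omega⟩
    have hshift := ih (fun k => hc (k + 1)) (fun k => hd (k + 1))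
      fun j hj => h (j + 1) ⟨by omega, by simpa using hj.2⟩
    have e : binaryVal c - binaryVal d =
        (binaryVal (fun k => c (k + 1)) - binaryVal (fun k => d (k + 1))) / 2 := by
      linarith [two_mul_binaryVal hc, two_mul_binaryVal hd,
        (congrArg (fun n : ℤ => (n : ℝ)) h1 : (c 1 : ℝ) = d 1)]
    rw [e, abs_div, abs_two, pow_succ]
    linarith

end BinaryVal

theorem binaryVal_eps {x : ℝ} (hx : x ∈ Ioc 0 1) : binaryVal (fun k => eps k x) = x :=
  eq_of_eps_eq (binaryVal_mem_Ioc (eps_eq_zero_or_one hx) (frequently_eps_eq_one hx)) hx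
    (eps_binaryVal (eps_eq_zero_or_one hx) (frequently_eps_eq_one hx))

def IsFree (J : Set ℕ) (k : ℕ) : Prop := 1 ≤ k ∧ k ∉ J

def fixedDigitSet (J : Set ℕ) (a : ℕ → ℤ) : Set ℝ :=
  {x | x ∈ Ioc 0 1 ∧ ∀ k ∈ J, eps k x = a k}

noncomputable def spliceDigits (J : Set ℕ) (a : ℕ → ℤ) (y : ℝ) (k : ℕ) : ℤ :=
  if k ∈ J then a k else eps (Nat.count (IsFree J) k + 1) y

noncomputable def splice (J : Set ℕ) (a : ℕ → ℤ) (y : ℝ) : ℝ := binaryVal (spliceDigits J a y)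

noncomputable def unsplice (J : Set ℕ) (x : ℝ) : ℝ :=
  binaryVal fun j => eps (Nat.nth (IsFree J) (j - 1)) x

section Splice

variable {J : Set ℕ} {a : ℕ → ℤ} {y : ℝ}

theorem spliceDigits_nth (hJ : (Set.ofPred (IsFree J)).Infinite) (n : ℕ) :
    spliceDigits J a y (Nat.nth (IsFree J) n) = eps (n + 1) y := by
  rw [spliceDigits, if_neg (Nat.nth_mem_of_infinite hJ n).2, Nat.count_nth_of_infinite hJ]

theorem spliceDigits_eq_zero_or_one (ha : ∀ k ∈ J, a k = 0 ∨ a k = 1) (hy : y ∈ Ioc 0 1)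
    (k : ℕ) : spliceDigits J a y k = 0 ∨ spliceDigits J a y k = 1 := by
  unfold spliceDigits
  split_ifs with hk
  exacts [ha k hk, eps_eq_zero_or_one hy _]

theorem frequently_spliceDigits_eq_one (hJ : (Set.ofPred (IsFree J)).Infinite) (hy : y ∈ Ioc 0 1) :
    ∃ᶠ k in atTop, spliceDigits J a y k = 1 := by
  rw [frequently_atTop]
  intro N
  obtain ⟨j, hj, hyj⟩ := frequently_atTop.1 (frequently_eps_eq_one hy) (N + 1)
  refine ⟨Nat.nth (IsFree J) (j - 1), ?_, ?_⟩
  · have : j - 1 ≤ Nat.nth (IsFree J) (j - 1) := (Nat.nth_strictMono hJ).id_le (j - 1)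
    omega
  · rwa [spliceDigits_nth hJ, Nat.sub_add_cancel (by omega)]

theorem eps_splice (ha : ∀ k ∈ J, a k = 0 ∨ a k = 1) (hJ : (Set.ofPred (IsFree J)).Infinite)
    (hy : y ∈ Ioc 0 1) : ∀ k ∈ Ici 1, eps k (splice J a y) = spliceDigits J a y k :=
  eps_binaryVal (spliceDigits_eq_zero_or_one ha hy) (frequently_spliceDigits_eq_one hJ hy)

theorem splice_mem_fixedDigitSet (hJ1 : ∀ k ∈ J, 1 ≤ k) (ha : ∀ k ∈ J, a k = 0 ∨ a k = 1)
    (hJ : (Set.ofPred (IsFree J)).Infinite) (hy : y ∈ Ioc 0 1) : splice J a y ∈ fixedDigitSet J a :=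
  ⟨binaryVal_mem_Ioc (spliceDigits_eq_zero_or_one ha hy) (frequently_spliceDigits_eq_one hJ hy),
    fun k hk => by rw [eps_splice ha hJ hy k (hJ1 k hk), spliceDigits, if_pos hk]⟩

theorem unsplice_splice (ha : ∀ k ∈ J, a k = 0 ∨ a k = 1) (hJ : (Set.ofPred (IsFree J)).Infinite)
    (hy : y ∈ Ioc 0 1) : unsplice J (splice J a y) = y := by
  conv_rhs => rw [← binaryVal_eps hy]
  refine binaryVal_congr fun j hj => ?_
  rw [eps_splice ha hJ hy _ (Nat.nth_mem_of_infinite hJ _).1, spliceDigits_nth hJ,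
    Nat.sub_add_cancel hj]

theorem Ioc_subset_image_unsplice (hJ1 : ∀ k ∈ J, 1 ≤ k) (ha : ∀ k ∈ J, a k = 0 ∨ a k = 1)
    (hJ : (Set.ofPred (IsFree J)).Infinite) : Ioc 0 1 ⊆ unsplice J '' fixedDigitSet J a :=
  fun y hy => ⟨splice J a y, splice_mem_fixedDigitSet hJ1 ha hJ hy, unsplice_splice ha hJ hy⟩

end Splice

theorem count_isFree_add_card (J : Set ℕ) (n : ℕ) :
    Nat.count (IsFree J) (n + 1) + ((Finset.Icc 1 n).filter (fun k => k ∈ J)).card = n := by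
  have hfree : Nat.count (IsFree J) (n + 1) = ((Finset.Icc 1 n).filter (fun k => k ∉ J)).card := by
    rw [Nat.count_eq_card_filter_range]
    congr 1
    ext k
    rw [Finset.mem_filter, Finset.mem_filter, Finset.mem_range, Finset.mem_Icc, IsFree,
      Nat.lt_succ_iff]
    tauto
  rw [hfree, add_comm, Finset.card_filter_add_card_filter_not, Nat.card_Icc, Nat.add_sub_cancel]

theorem half_pow_le_two_rpow_mul_rpow {P k : ℕ} {r B t : ℝ} (hr : 0 ≤ r) (ht : (1 / 2) ^ k ≤ t)
    (h : r * k ≤ P + B) : (1 / 2 : ℝ) ^ P ≤ 2 ^ B * t ^ r := by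
  have h2 : ∀ n : ℕ, (1 / 2 : ℝ) ^ n = 2 ^ (-(n : ℝ)) := fun n => by
    rw [Real.rpow_neg zero_le_two, Real.rpow_natCast, one_div, inv_pow]
  calc (1 / 2 : ℝ) ^ P = 2 ^ (-(P : ℝ)) := h2 P
    _ ≤ 2 ^ (B + -(k : ℝ) * r) := Real.rpow_le_rpow_of_exponent_le one_le_two (by linarith)
    _ = 2 ^ B * ((1 / 2) ^ k) ^ r := by
      rw [Real.rpow_add two_pos, Real.rpow_mul zero_le_two, h2]
    _ ≤ 2 ^ B * t ^ r := by gcongr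

section Holder

variable {J : Set ℕ} {a : ℕ → ℤ} {x y : ℝ}

theorem abs_unsplice_sub_le (hx : x ∈ Ioc 0 1) (hy : y ∈ Ioc 0 1) {m : ℕ}
    (h : ∀ j ∈ Icc 1 m, eps j x = eps j y) :
    |unsplice J x - unsplice J y| ≤ (1 / 2) ^ Nat.count (IsFree J) (m + 1) := by
  refine abs_binaryVal_sub_le (fun _ => eps_eq_zero_or_one hx _)
    (fun _ => eps_eq_zero_or_one hy _) fun j ⟨hj1, hjP⟩ => h _ ⟨?_, ?_⟩
  all_goals have hlt : j - 1 < Nat.count (IsFree J) (m + 1) := by omega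
  · exact (Nat.nth_mem (j - 1) fun hf => hlt.trans_le (Nat.count_le_card hf (m + 1))).1
  · exact Nat.lt_succ_iff.1 (Nat.nth_lt_of_lt_count hlt)

theorem abs_unsplice_sub_le_rpow {q : ℕ} {δ D : ℝ} (hδ : δ ≤ 1)
    (hgap : ∀ n, ∃ k ∈ J, n < k ∧ k ≤ n + q)
    (hden : ∀ n, (((Finset.Icc 1 n).filter (fun k => k ∈ J)).card : ℝ) ≤ δ * n + D)
    (hx : x ∈ fixedDigitSet J a) (hy : y ∈ fixedDigitSet J a) :
    |unsplice J x - unsplice J y| ≤ 2 ^ (D + (q + 1) * (1 - δ)) * |x - y| ^ (1 - δ) := by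
  rcases eq_or_ne x y with rfl | hxy
  · rw [sub_self, abs_zero]
    positivity
  obtain ⟨m, hagree, hne⟩ := exists_eps_eq_and_eps_ne hx.1 hy.1 hxy
  obtain ⟨k, hkJ, hmk, hkq⟩ := hgap (m + 1)
  obtain ⟨l, rfl⟩ : ∃ l, k = l + 1 := ⟨k - 1, by omega⟩
  have hlow : (1 / 2) ^ (l + 1) < |x - y| :=
    half_pow_lt_abs_sub_of_eps_ne hx.1 hy.1 ⟨by omega, by omega⟩ hne
      ((hx.2 _ hkJ).trans (hy.2 _ hkJ).symm)
  have hcount : (1 - δ) * m - D ≤ Nat.count (IsFree J) (m + 1) := by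
    have := congrArg (fun n : ℕ => (n : ℝ)) (count_isFree_add_card J m)
    push_cast at this
    linarith [hden m]
  refine (abs_unsplice_sub_le hx.1 hy.1 hagree).trans
    (half_pow_le_two_rpow_mul_rpow (sub_nonneg.2 hδ) hlow.le ?_)
  have : ((l + 1 : ℕ) : ℝ) ≤ m + 1 + q := by exact_mod_cast hkq
  nlinarith [sub_nonneg.2 hδ]

end Holder

theorem infinite_isFree {J : Set ℕ} {δ D : ℝ} (hδ : δ < 1)
    (hden : ∀ n, (((Finset.Icc 1 n).filter (fun k => k ∈ J)).card : ℝ) ≤ δ * n + D) :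
    (Set.ofPred (IsFree J)).Infinite := by
  intro hfin
  set C := hfin.toFinset.card
  obtain ⟨n, hn⟩ := exists_nat_gt ((C + D) / (1 - δ))
  have hcount : (Nat.count (IsFree J) (n + 1) : ℝ) ≤ C := by
    exact_mod_cast Nat.count_le_card hfin (n + 1)
  have := congrArg (fun n : ℕ => (n : ℝ)) (count_isFree_add_card J n)
  push_cast at this
  rw [div_lt_iff₀ (sub_pos.2 hδ)] at hn
  nlinarith [hden n]

theorem holderOnWith_of_dist_le {X Y : Type*} [PseudoMetricSpace X] [PseudoMetricSpace Y]
    {C r : NNReal} {f : X → Y} {s : Set X}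
    (h : ∀ x ∈ s, ∀ y ∈ s, dist (f x) (f y) ≤ C * dist x y ^ (r : ℝ)) : HolderOnWith C r f s := by
  intro x hx y hy
  rw [edist_nndist, edist_nndist, ← ENNReal.coe_rpow_of_nonneg _ r.coe_nonneg, ← ENNReal.coe_mul,
    ENNReal.coe_le_coe, ← NNReal.coe_le_coe]
  push_cast
  exact h x hx y hy

theorem le_dimH_of_holderOnWith {X : Type*} [EMetricSpace X] {C r : NNReal} {f : X → ℝ}
    {s : Set X} (hf : HolderOnWith C r f s) (hr : 0 < r) (hs : Ioc 0 1 ⊆ f '' s) :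
    (r : ℝ≥0∞) ≤ dimH s := by
  have h1 : dimH (Ioc (0 : ℝ) 1) = 1 := by
    rw [Real.dimH_of_nonempty_interior (by simp), Module.finrank_self, Nat.cast_one]
  have := (h1.symm.le.trans (dimH_mono hs)).trans (hf.dimH_image_le hr)
  rwa [ENNReal.le_div_iff_mul_le (Or.inl (by exact_mod_cast hr.ne')) (Or.inl ENNReal.coe_ne_top),
    one_mul] at this

theorem le_dimH_fixedDigitSet {J : Set ℕ} {a : ℕ → ℤ} (hJ1 : ∀ k ∈ J, 1 ≤ k)
    (ha : ∀ k ∈ J, a k = 0 ∨ a k = 1) {q : ℕ} {δ D : ℝ} (hδ : δ < 1)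
    (hgap : ∀ n, ∃ k ∈ J, n < k ∧ k ≤ n + q)
    (hden : ∀ n, (((Finset.Icc 1 n).filter (fun k => k ∈ J)).card : ℝ) ≤ δ * n + D) :
    ENNReal.ofReal (1 - δ) ≤ dimH (fixedDigitSet J a) := by
  have hH : HolderOnWith ((2 : ℝ) ^ (D + (q + 1) * (1 - δ))).toNNReal (1 - δ).toNNReal (unsplice J)
      (fixedDigitSet J a) := holderOnWith_of_dist_le fun x hx y hy => by
    rw [Real.coe_toNNReal _ (by positivity), Real.coe_toNNReal _ (by linarith)]
    exact abs_unsplice_sub_le_rpow hδ.le hgap hden hx hy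
  exact le_dimH_of_holderOnWith hH (Real.toNNReal_pos.2 (by linarith))
    (Ioc_subset_image_unsplice hJ1 ha (infinite_isFree hδ hden))

theorem exists_le_mul_add_of_tendsto_div {u : ℕ → ℝ}
    (hu : Tendsto (fun n : ℕ => u n / n) atTop (nhds 0)) {ε : ℝ} (hε : 0 < ε) :
    ∃ D, ∀ n : ℕ, u n ≤ ε * n + D := by
  have hev : ∀ᶠ n : ℕ in atTop, u n - ε * n ≤ 0 := by
    filter_upwards [hu.eventually (gt_mem_nhds hε), eventually_gt_atTop 0] with n hn hn0
    rw [div_lt_iff₀ (by exact_mod_cast hn0)] at hn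
    linarith
  obtain ⟨D, hD⟩ := (isBoundedUnder_of_eventually_le hev).bddAbove_range
  exact ⟨D, fun n => by linarith [hD (mem_range_self n)]⟩

theorem card_filter_multiples (q n : ℕ) :
    ((Finset.Icc 1 n).filter (fun k => k ∈ {k | 0 < k ∧ q ∣ k})).card = n / q := by
  rw [← Nat.Ioc_filter_dvd_card_eq_div]
  congr 1
  ext k
  simp only [Finset.mem_filter, Finset.mem_Icc, Finset.mem_Ioc, mem_ofPred_eq]
  omega

theorem le_dimH_fixedDigitSet_of_tendsto {J : Set ℕ} (hJ : ∀ k ∈ J, 1 ≤ k)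
    (hd : Tendsto (fun n : ℕ => (((Finset.Icc 1 n).filter (fun k => k ∈ J)).card : ℝ) / n)
      atTop (nhds 0))
    {a : ℕ → ℤ} (ha : ∀ k, a k = 0 ∨ a k = 1) {q : ℕ} (hq : 3 ≤ q) :
    ENNReal.ofReal (1 - 2 / q) ≤ dimH (fixedDigitSet J a) := by
  have hq0 : (0 : ℝ) < q := by exact_mod_cast (by omega : 0 < q)
  obtain ⟨D, hD⟩ := exists_le_mul_add_of_tendsto_div hd (one_div_pos.2 hq0)
  set M : Set ℕ := {k | 0 < k ∧ q ∣ k}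
  have hgap : ∀ n, ∃ k ∈ J ∪ M, n < k ∧ k ≤ n + q := fun n =>
    ⟨q * (n / q + 1), Or.inr ⟨by positivity, dvd_mul_right _ _⟩,
      Nat.lt_mul_div_succ n (by omega), by rw [mul_add_one]; linarith [Nat.mul_div_le n q]⟩
  refine (le_dimH_fixedDigitSet (J := J ∪ M) (a := a) (δ := 2 / q) (D := D)
    (fun k hk => hk.elim (hJ k) And.left) (fun k _ => ha k) ?_ hgap fun n => ?_).trans
    (dimH_mono fun x hx => ⟨hx.1, fun k hk => hx.2 k (Or.inl hk)⟩)
  · rw [div_lt_one hq0]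
    exact_mod_cast (by omega : 2 < q)
  refine le_trans (Nat.cast_le.2 ((Finset.card_le_card fun k hk => ?_).trans
    (Finset.card_union_le ((Finset.Icc 1 n).filter (· ∈ J)) ((Finset.Icc 1 n).filter (· ∈ M))))) ?_
  · simp only [Finset.mem_union, Finset.mem_filter, Set.mem_union] at hk ⊢
    tauto
  rw [card_filter_multiples, Nat.cast_add]
  have hM : ((n / q : ℕ) : ℝ) ≤ n / q := Nat.cast_div_le
  have : (2 / q : ℝ) * n = 1 / q * n + n / q := by ring
  linarith [hD n]

theorem saint_petersburg_stmt10 (J : Set ℕ) (hJ : ∀ k ∈ J, 1 ≤ k)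
    (hd : Filter.Tendsto
      (fun n : ℕ => (((Finset.Icc 1 n).filter (fun k => k ∈ J)).card : ℝ) / n)
      Filter.atTop (nhds 0))
    (a : ℕ → ℤ) (ha : ∀ k, a k = 0 ∨ a k = 1) :
    dimH {x : ℝ | x ∈ Set.Ioc (0 : ℝ) 1 ∧ ∀ k ∈ J, eps k x = a k} = 1 := by
  show dimH (fixedDigitSet J a) = 1
  refine le_antisymm ((dimH_mono (subset_univ _)).trans_eq Real.dimH_univ) ?_
  have hlim : Tendsto (fun q : ℕ => ENNReal.ofReal (1 - 2 / q)) atTop (nhds 1) := by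
    rw [← ENNReal.ofReal_one]
    refine ENNReal.tendsto_ofReal ?_
    simpa using (tendsto_const_div_atTop_nhds_zero_nat (2 : ℝ)).const_sub 1
  exact le_of_tendsto hlim (eventually_atTop.2
    ⟨3, fun q hq => le_dimH_fixedDigitSet_of_tendsto hJ hd ha hq⟩)
end

section
/- Let Ψ(n) = 2^{n^γ} with γ ≥ 1. Then for every β ∈ (0, ∞), the set E_Ψ(β) = {x ∈ (0,1] : lim_{n→∞} S_n(x)/Ψ(n) = β} is empty. -/
/-!
If `S n x / Ψ n → β > 0` with `Ψ (n + 1) ≥ 2 Ψ n`, then the increments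
`φ (T^n x) = S (n + 1) x - S n x` are eventually at least `β Ψ (n + 1) / 4`, so they tend to
infinity. But `φ y ≤ 1 / y`, so once `φ y ≥ 2` the point `y` lies in `(0, 1/2]`, where `T` doubles
and `φ` halves: the increments eventually decrease, which is absurd.
-/

open Filter Set MeasureTheory
open scoped ENNReal Classical

open Topology

lemma T_pos (y : ℝ) : 0 < T y := by
  have := Int.ceil_lt_add_one (2 * y)
  unfold T
  linarith

lemma iterate_T_pos {x : ℝ} (hx : 0 < x) : ∀ n, 0 < T^[n] x
  | 0 => hx
  | n + 1 => by rw [Function.iterate_succ_apply']; exact T_pos _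

lemma T_of_le_half {y : ℝ} (hy : 0 < y) (hy2 : y ≤ 1 / 2) : T y = 2 * y := by
  have hceil : ⌈2 * y⌉ = 1 := by
    rw [Int.ceil_eq_iff]
    constructor <;> push_cast <;> linarith
  simp only [T, hceil, Int.cast_one]
  ring

lemma phi_le_inv {y : ℝ} (hy : 0 < y) : phi y ≤ y⁻¹ :=
  calc phi y = (2 : ℝ) ^ (⌊Real.logb 2 y⁻¹⌋ : ℝ) := (Real.rpow_intCast 2 _).symm
    _ ≤ 2 ^ Real.logb 2 y⁻¹ := Real.rpow_le_rpow_of_exponent_le one_le_two (Int.floor_le _)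
    _ = y⁻¹ := Real.rpow_logb two_pos (by norm_num) (inv_pos.2 hy)

lemma phi_two_mul {y : ℝ} (hy : 0 < y) : phi (2 * y) = phi y / 2 := by
  have hlog : Real.logb 2 (2 * y)⁻¹ = Real.logb 2 y⁻¹ - (1 : ℤ) := by
    rw [mul_inv, Real.logb_mul (by norm_num) (inv_ne_zero hy.ne'), Real.logb_inv,
      Real.logb_self_eq_one one_lt_two]
    push_cast
    ring
  rw [phi, hlog, Int.floor_sub_intCast, zpow_sub₀ two_ne_zero, zpow_one, phi]

lemma phi_T_of_two_le_phi {y : ℝ} (hy : 0 < y) (hφ : 2 ≤ phi y) : phi (T y) = phi y / 2 := by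
  have hy2 : y ≤ 1 / 2 := by
    have := hφ.trans (phi_le_inv hy)
    rw [le_inv_comm₀ two_pos hy] at this
    linarith
  rw [T_of_le_half hy hy2, phi_two_mul hy]

lemma S_succ_sub (n : ℕ) (x : ℝ) : S (n + 1) x - S n x = phi (T^[n] x) := by
  simp only [S, Finset.sum_range_succ, add_sub_cancel_left]

lemma two_mul_two_rpow_rpow_le {a γ : ℝ} (ha : 0 ≤ a) (hγ : 1 ≤ γ) :
    2 * (2 : ℝ) ^ (a ^ γ) ≤ 2 ^ ((a + 1) ^ γ) := by
  have hsuper : a ^ γ + 1 ≤ (a + 1) ^ γ := by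
    simpa using Real.add_rpow_le_rpow_add ha zero_le_one hγ
  calc 2 * (2 : ℝ) ^ (a ^ γ) = 2 ^ (a ^ γ + 1) := by
        rw [Real.rpow_add two_pos, Real.rpow_one, mul_comm]
    _ ≤ 2 ^ ((a + 1) ^ γ) := Real.rpow_le_rpow_of_exponent_le one_le_two hsuper

lemma tendsto_atTop_of_two_mul_le_succ {Ψ : ℕ → ℝ} (hΨ : 0 < Ψ 0)
    (hdouble : ∀ n, 2 * Ψ n ≤ Ψ (n + 1)) : Tendsto Ψ atTop atTop := by
  have hgrow : ∀ n, 2 ^ n * Ψ 0 ≤ Ψ n := by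
    intro n
    induction n with
    | zero => simp
    | succ n ih => rw [pow_succ]; linarith [hdouble n]
  exact tendsto_atTop_mono hgrow
    ((tendsto_pow_atTop_atTop_of_one_lt one_lt_two).atTop_mul_const hΨ)

lemma tendsto_succ_sub_atTop_of_div_tendsto {s Ψ : ℕ → ℝ} {β : ℝ} (hβ : 0 < β)
    (hΨ : ∀ n, 0 < Ψ n) (hdouble : ∀ n, 2 * Ψ n ≤ Ψ (n + 1))
    (hs : Tendsto (fun n ↦ s n / Ψ n) atTop (𝓝 β)) :
    Tendsto (fun n ↦ s (n + 1) - s n) atTop atTop := by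
  have hupper : ∀ᶠ n in atTop, s n / Ψ n < 5 * β / 4 :=
    hs.eventually (gt_mem_nhds (by linarith))
  have hlower : ∀ᶠ n in atTop, 7 * β / 8 < s (n + 1) / Ψ (n + 1) :=
    (hs.comp (tendsto_add_atTop_nat 1)).eventually (lt_mem_nhds (by linarith))
  have hincr : ∀ᶠ n in atTop, β / 4 * Ψ (n + 1) ≤ s (n + 1) - s n := by
    filter_upwards [hupper, hlower] with n hn hn1
    rw [div_lt_iff₀ (hΨ n)] at hn
    rw [lt_div_iff₀ (hΨ (n + 1))] at hn1
    nlinarith [hdouble n]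
  have hΨtop := tendsto_atTop_of_two_mul_le_succ (hΨ 0) hdouble
  exact tendsto_atTop_mono' _ hincr
    (((tendsto_add_atTop_iff_nat 1).2 hΨtop).const_mul_atTop (by positivity))

lemma not_tendsto_atTop_of_eventually_succ_le {u : ℕ → ℝ}
    (h : ∀ᶠ n in atTop, u (n + 1) ≤ u n) : ¬ Tendsto u atTop atTop := by
  obtain ⟨M, hM⟩ := eventually_atTop.1 h
  have hbound : ∀ n ≥ M, u n ≤ u M :=
    Nat.le_induction le_rfl fun n hn ih ↦ (hM n hn).trans ih
  intro hu
  obtain ⟨n, hn, hnM⟩ := ((hu.eventually_gt_atTop (u M)).and (eventually_ge_atTop M)).exists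
  exact (hbound n hnM).not_gt hn

theorem saint_petersburg_stmt11 (γ : ℝ) (hγ : 1 ≤ γ) (β : ℝ) (hβ : 0 < β) :
    {x : ℝ | x ∈ Set.Ioc (0 : ℝ) 1 ∧
      Filter.Tendsto (fun n : ℕ => S n x / (2 : ℝ) ^ ((n : ℝ) ^ γ))
        Filter.atTop (nhds β)} = ∅ := by
  refine Set.eq_empty_of_forall_notMem fun x ⟨hx, hlim⟩ ↦ ?_
  have hdouble (n : ℕ) : 2 * (2 : ℝ) ^ ((n : ℝ) ^ γ) ≤ 2 ^ (((n + 1 : ℕ) : ℝ) ^ γ) := by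
    simpa using two_mul_two_rpow_rpow_le n.cast_nonneg hγ
  have hφ : Tendsto (fun n ↦ phi (T^[n] x)) atTop atTop := by
    simpa only [S_succ_sub] using tendsto_succ_sub_atTop_of_div_tendsto hβ
      (fun n ↦ Real.rpow_pos_of_pos two_pos _) hdouble hlim
  refine not_tendsto_atTop_of_eventually_succ_le ?_ hφ
  filter_upwards [hφ.eventually_ge_atTop 2] with n hn
  rw [Function.iterate_succ_apply', phi_T_of_two_le_phi (iterate_T_pos hx.1 n) hn]
  linarith
end

section
/- Suppose x ∈ (0,1] has binary expansion [0^{n_1-1}1 0^{n_2-1}1 ⋯] and for some α > 0 and every δ > 0 there is L such that (α−δ)ℓ ≤ 2^{n_1}+⋯+2^{n_ℓ}−ℓ ≤ (α+δ)ℓ for all ℓ ≥ L. Then n_ℓ = O(log ℓ), and consequently lim_{ℓ→∞} (n_1+⋯+n_ℓ)/(n_1+⋯+n_{ℓ+1}) = 1. -/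
open Filter Set MeasureTheory
open scoped ENNReal Classical

theorem saint_petersburg_stmt19 (x : ℝ) (hx : x ∈ Set.Ioc (0 : ℝ) 1)
    (α : ℝ) (hα : 0 < α) (n : ℕ → ℕ) (hn : ∀ k, 1 ≤ n k)
    (hdig : ∀ j, 1 ≤ j →
      (eps j x = 1 ↔ ∃ ℓ : ℕ, j = ∑ k ∈ Finset.range (ℓ + 1), n k))
    (happrox : ∀ δ : ℝ, 0 < δ → ∃ L : ℕ, ∀ ℓ : ℕ, L ≤ ℓ →
      (α - δ) * ℓ ≤ (∑ k ∈ Finset.range ℓ, (2 : ℝ) ^ (n k)) - ℓ ∧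
      (∑ k ∈ Finset.range ℓ, (2 : ℝ) ^ (n k)) - ℓ ≤ (α + δ) * ℓ) :
    (∃ C : ℝ, 0 < C ∧ ∀ᶠ ℓ : ℕ in Filter.atTop, (n ℓ : ℝ) ≤ C * Real.log ℓ) ∧
    Filter.Tendsto
      (fun ℓ : ℕ =>
        ((∑ k ∈ Finset.range ℓ, n k : ℕ) : ℝ) /
          ((∑ k ∈ Finset.range (ℓ + 1), n k : ℕ) : ℝ))
      Filter.atTop (nhds 1) := by
  obtain ⟨L, hL⟩ := happrox α hα
  -- key pointwise bound: 2^{n ℓ} ≤ (2α+1)(ℓ+1) for ℓ ≥ L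
  have key : ∀ ℓ : ℕ, L ≤ ℓ → (2 : ℝ) ^ (n ℓ) ≤ (2*α + 1) * (ℓ + 1) := by
    intro ℓ hℓ
    have h1 := (hL (ℓ+1) (by omega)).2
    have h2 : (ℓ : ℝ) ≤ ∑ k ∈ Finset.range ℓ, (2 : ℝ) ^ (n k) := by
      calc (ℓ : ℝ) = ∑ k ∈ Finset.range ℓ, (1:ℝ) := by simp
        _ ≤ _ := Finset.sum_le_sum (fun k _ => one_le_pow₀ (by norm_num))
    have hsucc : (∑ k ∈ Finset.range (ℓ+1), (2:ℝ) ^ (n k)) =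
        (∑ k ∈ Finset.range ℓ, (2:ℝ) ^ (n k)) + 2 ^ (n ℓ) := Finset.sum_range_succ _ _
    push_cast at h1
    nlinarith [h1, h2, hsucc]
  set C : ℝ := (Real.log (2*α + 1) + 2) / Real.log 2 with hC
  have hlog2 : (0:ℝ) < Real.log 2 := Real.log_pos (by norm_num)
  have hlogα : 0 ≤ Real.log (2*α + 1) := Real.log_nonneg (by linarith)
  have hCpos : 0 < C := by positivity
  have hbound : ∀ᶠ ℓ : ℕ in atTop, (n ℓ : ℝ) ≤ C * Real.log ℓ := by
    filter_upwards [eventually_ge_atTop L, eventually_ge_atTop 3] with ℓ hℓL hℓ3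
    have h3 : (3:ℝ) ≤ (ℓ:ℝ) := by exact_mod_cast hℓ3
    have hlogℓ : 1 ≤ Real.log ℓ := by
      have : Real.exp 1 ≤ (ℓ:ℝ) := (Real.exp_one_lt_d9.le.trans (by norm_num)).trans h3
      calc (1:ℝ) = Real.log (Real.exp 1) := (Real.log_exp 1).symm
        _ ≤ Real.log ℓ := Real.log_le_log (Real.exp_pos 1) this
    have h2p := key ℓ hℓL
    have hpos : (0:ℝ) < (2*α+1) * (ℓ+1) := by positivity
    have hl1 : (n ℓ : ℝ) * Real.log 2 ≤ Real.log ((2*α+1) * (ℓ+1)) := by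
      calc (n ℓ : ℝ) * Real.log 2 = Real.log ((2:ℝ) ^ (n ℓ)) := by rw [Real.log_pow]
        _ ≤ _ := Real.log_le_log (by positivity) h2p
    have hl2 : Real.log ((2*α+1) * (ℓ+1)) ≤ Real.log (2*α+1) + 2 * Real.log ℓ := by
      rw [Real.log_mul (by linarith) (by positivity)]
      have : Real.log ((ℓ:ℝ)+1) ≤ 2 * Real.log ℓ := by
        rw [two_mul, ← Real.log_mul (by linarith) (by linarith)]
        exact Real.log_le_log (by positivity) (by nlinarith)
      linarith
    have hl3 : Real.log (2*α+1) + 2 * Real.log ℓ ≤ (Real.log (2*α+1) + 2) * Real.log ℓ := by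
      nlinarith
    have : (n ℓ : ℝ) * Real.log 2 ≤ (Real.log (2*α+1) + 2) * Real.log ℓ := by linarith
    rw [hC]
    rw [div_mul_eq_mul_div, le_div_iff₀ hlog2]
    linarith
  refine ⟨⟨C, hCpos, hbound⟩, ?_⟩
  -- part 2
  have hS : ∀ ℓ : ℕ, ℓ ≤ ∑ k ∈ Finset.range ℓ, n k := by
    intro ℓ
    calc ℓ = ∑ k ∈ Finset.range ℓ, 1 := by simp
      _ ≤ _ := Finset.sum_le_sum (fun k _ => hn k)
  have hu : Tendsto (fun ℓ : ℕ => (n ℓ : ℝ) / ((∑ k ∈ Finset.range ℓ, n k : ℕ) : ℝ))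
      atTop (nhds 0) := by
    have hmaj : Tendsto (fun ℓ : ℕ => C * (Real.log ℓ / ℓ)) atTop (nhds 0) := by
      have h1 : Tendsto (fun y : ℝ => Real.log y / y) atTop (nhds 0) :=
        Real.isLittleO_log_id_atTop.tendsto_div_nhds_zero
      have h2 : Tendsto (fun ℓ : ℕ => (ℓ : ℝ)) atTop atTop := tendsto_natCast_atTop_atTop
      have := (h1.comp h2).const_mul C
      simpa [Function.comp] using this
    refine squeeze_zero' ?_ ?_ hmaj
    · filter_upwards [eventually_ge_atTop 1] with ℓ hℓ
      have := hS ℓ; positivity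
    · filter_upwards [hbound, eventually_ge_atTop 1] with ℓ hb hℓ
      have hℓ1 : (1:ℝ) ≤ (ℓ:ℝ) := by exact_mod_cast hℓ
      have hSpos : (0:ℝ) < ((∑ k ∈ Finset.range ℓ, n k : ℕ) : ℝ) := by
        have := hS ℓ
        have : (ℓ:ℝ) ≤ ((∑ k ∈ Finset.range ℓ, n k : ℕ) : ℝ) := by exact_mod_cast this
        linarith
      have hSge : (ℓ:ℝ) ≤ ((∑ k ∈ Finset.range ℓ, n k : ℕ) : ℝ) := by exact_mod_cast hS ℓ
      calc (n ℓ : ℝ) / ((∑ k ∈ Finset.range ℓ, n k : ℕ) : ℝ)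
            ≤ (C * Real.log ℓ) / (ℓ:ℝ) :=
            div_le_div₀ (by
              have : 0 ≤ Real.log ℓ := Real.log_nonneg hℓ1
              positivity) hb (by linarith) hSge
        _ = C * (Real.log ℓ / ℓ) := mul_div_assoc _ _ _
  have heq : ∀ᶠ ℓ : ℕ in atTop,
      ((∑ k ∈ Finset.range ℓ, n k : ℕ) : ℝ) / ((∑ k ∈ Finset.range (ℓ+1), n k : ℕ) : ℝ)
        = 1 / (1 + (n ℓ : ℝ) / ((∑ k ∈ Finset.range ℓ, n k : ℕ) : ℝ)) := by
    filter_upwards [eventually_ge_atTop 1] with ℓ hℓ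
    have hSpos : (0:ℝ) < ((∑ k ∈ Finset.range ℓ, n k : ℕ) : ℝ) := by
      have : (ℓ:ℝ) ≤ ((∑ k ∈ Finset.range ℓ, n k : ℕ) : ℝ) := by exact_mod_cast hS ℓ
      have hℓ1 : (1:ℝ) ≤ (ℓ:ℝ) := by exact_mod_cast hℓ
      linarith
    have hsucc : ((∑ k ∈ Finset.range (ℓ+1), n k : ℕ) : ℝ)
        = ((∑ k ∈ Finset.range ℓ, n k : ℕ) : ℝ) + (n ℓ : ℝ) := by
      rw [Finset.sum_range_succ]; push_cast; ring
    have hS0 : ((∑ k ∈ Finset.range ℓ, n k : ℕ) : ℝ) ≠ 0 := ne_of_gt hSpos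
    rw [hsucc]
    rw [div_eq_div_iff (by positivity) (by positivity)]
    push_cast at hS0 ⊢
    field_simp
  have hfinal : Tendsto (fun ℓ : ℕ =>
      1 / (1 + (n ℓ : ℝ) / ((∑ k ∈ Finset.range ℓ, n k : ℕ) : ℝ))) atTop (nhds 1) := by
    have h1 : Tendsto (fun ℓ : ℕ =>
        1 + (n ℓ : ℝ) / ((∑ k ∈ Finset.range ℓ, n k : ℕ) : ℝ)) atTop (nhds (1 + 0)) :=
      tendsto_const_nhds.add hu
    have := h1.inv₀ (by norm_num)
    simpa [one_div] using this
  exact Tendsto.congr' (Filter.EventuallyEq.symm heq) hfinal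
end
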